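/- arXiv:1203.3318 — 7 statements merged into one kernel-verified Lean document; each statement's English description precedes it below -/
import Mathlib

section
/- Let h : J → ℝ be a positive function with [0,1] ⊆ J, let α > 0, and let p, q > 1 satisfy 1/p + 1/q = 1 with αp - p + 1 > 0 and h^q integrable on [0,1]. Then ∫_0^1 t^{α-1} [h(t) + h(1-t)] dt ≤ 2/(αp - p + 1)^{1/p} · (∫_0^1 h(t)^q dt)^{1/q}. -/
open MeasureTheory

lemma memLp_of_int_rpow {μ : Measure ℝ} {g : ℝ → ℝ} {r : ℝ} (hr : 0 < r)
    (hg : AEStronglyMeasurable g μ) (hgn : 0 ≤ᵐ[μ] g)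
    (hint : Integrable (fun x => g x ^ r) μ) : MemLp g (ENNReal.ofReal r) μ := by
  rw [← memLp_norm_rpow_iff (q := ENNReal.ofReal r) hg
    (by simp [hr, hr.le]) (by simp)]
  have h1 : ENNReal.ofReal r / ENNReal.ofReal r = 1 :=
    ENNReal.div_self (by simp [hr, hr.le]) (by simp)
  rw [h1, ENNReal.toReal_ofReal hr.le, memLp_one_iff_integrable]
  refine hint.congr ?_
  filter_upwards [hgn] with x hx
  rw [Real.norm_of_nonneg hx]

/-- Hölder/Minkowski bound on the weighted integral of h. -/
theorem stmt_2 (J : Set ℝ) (hJ : Set.Icc (0:ℝ) 1 ⊆ J)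
    (h : ℝ → ℝ) (hpos : ∀ x ∈ J, 0 < h x)
    (α : ℝ) (hα : 0 < α)
    (p q : ℝ) (hp : 1 < p) (hq : 1 < q) (hpq : 1 / p + 1 / q = 1)
    (hαp : 0 < α * p - p + 1)
    (hhq : IntervalIntegrable (fun t => h t ^ q) volume 0 1) :
    (∫ t in (0:ℝ)..1, t ^ (α - 1) * (h t + h (1 - t)))
    ≤ 2 / (α * p - p + 1) ^ (1 / p) * (∫ t in (0:ℝ)..1, h t ^ q) ^ (1 / q) := by
  have hq0 : 0 < q := lt_trans one_pos hq
  have hp0 : 0 < p := lt_trans one_pos hp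
  set μ : Measure ℝ := volume.restrict (Set.Ioc (0:ℝ) 1) with hμ
  have hpq' : Real.HolderConjugate p q := Real.holderConjugate_iff.mpr ⟨hp, by rw [← one_div, ← one_div]; exact hpq⟩
  -- a.e. positivity facts
  have hmem : ∀ t ∈ Set.Ioc (0:ℝ) 1, t ∈ J := fun t ht => hJ ⟨ht.1.le, ht.2⟩
  have hmem' : ∀ t ∈ Set.Ioc (0:ℝ) 1, (1 - t) ∈ J := fun t ht =>
    hJ ⟨by linarith [ht.2], by linarith [ht.1]⟩
  have hh_nonneg : 0 ≤ᵐ[μ] h := by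
    rw [hμ, Filter.EventuallyLE, ae_restrict_iff' measurableSet_Ioc]
    exact Filter.Eventually.of_forall fun t ht => (hpos t (hmem t ht)).le
  have hh1_nonneg : 0 ≤ᵐ[μ] fun t => h (1 - t) := by
    rw [hμ, Filter.EventuallyLE, ae_restrict_iff' measurableSet_Ioc]
    exact Filter.Eventually.of_forall fun t ht => (hpos _ (hmem' t ht)).le
  have hf_nonneg : 0 ≤ᵐ[μ] fun t : ℝ => t ^ (α - 1) := by
    rw [hμ, Filter.EventuallyLE, ae_restrict_iff' measurableSet_Ioc]
    exact Filter.Eventually.of_forall fun t ht => Real.rpow_nonneg ht.1.le _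
  -- integrability over μ
  have hle01 : (0:ℝ) ≤ 1 := by norm_num
  have hhq_int : Integrable (fun t => h t ^ q) μ :=
    (intervalIntegrable_iff_integrableOn_Ioc_of_le hle01).mp hhq
  have hhq1 : IntervalIntegrable (fun t => h (1 - t) ^ q) volume 0 1 := by
    have := (hhq.comp_sub_left 1)
    simpa using this.symm
  have hhq1_int : Integrable (fun t => h (1 - t) ^ q) μ :=
    (intervalIntegrable_iff_integrableOn_Ioc_of_le hle01).mp hhq1
  -- measurability of h and h(1-·) a.e.
  have hmeas_pow : Measurable fun x : ℝ => x ^ (1 / q) := by fun_prop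
  have haesm : ∀ g : ℝ → ℝ, (0 ≤ᵐ[μ] g) → Integrable (fun t => g t ^ q) μ →
      AEStronglyMeasurable g μ := by
    intro g hgn hgi
    have h1 : AEMeasurable (fun t => (g t ^ q) ^ (1 / q)) μ :=
      hmeas_pow.comp_aemeasurable hgi.aemeasurable
    have h2 : g =ᵐ[μ] fun t => (g t ^ q) ^ (1 / q) := by
      filter_upwards [hgn] with x hx
      have hx' : (0:ℝ) ≤ g x := hx
      rw [← Real.rpow_mul hx', mul_one_div, div_self hq0.ne', Real.rpow_one]
    exact (aestronglyMeasurable_iff_aemeasurable).mpr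
      (h1.congr h2.symm)
  have hh_aesm : AEStronglyMeasurable h μ := haesm h hh_nonneg hhq_int
  have hh1_aesm : AEStronglyMeasurable (fun t => h (1 - t)) μ :=
    haesm _ hh1_nonneg hhq1_int
  -- MemLp facts for h and h(1-·)
  have hhLp : MemLp h (ENNReal.ofReal q) μ :=
    memLp_of_int_rpow hq0 hh_aesm hh_nonneg hhq_int
  have hh1Lp : MemLp (fun t => h (1 - t)) (ENNReal.ofReal q) μ :=
    memLp_of_int_rpow hq0 hh1_aesm hh1_nonneg hhq1_int
  -- weight function
  have hr : -1 < (α - 1) * p := by nlinarith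
  have hf_aesm : AEStronglyMeasurable (fun t : ℝ => t ^ (α - 1)) μ := by
    apply Measurable.aestronglyMeasurable; fun_prop
  have hfp_eq : (fun t : ℝ => (t ^ (α - 1)) ^ p) =ᵐ[μ] fun t => t ^ ((α - 1) * p) := by
    rw [hμ, Filter.EventuallyEq, ae_restrict_iff' measurableSet_Ioc]
    exact Filter.Eventually.of_forall fun t ht => (Real.rpow_mul ht.1.le _ _).symm
  have hfp_int : Integrable (fun t : ℝ => (t ^ (α - 1)) ^ p) μ := by
    refine Integrable.congr ?_ hfp_eq.symm
    exact (intervalIntegrable_iff_integrableOn_Ioc_of_le hle01).mp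
      (intervalIntegral.intervalIntegrable_rpow' hr)
  have hfLp : MemLp (fun t : ℝ => t ^ (α - 1)) (ENNReal.ofReal p) μ :=
    memLp_of_int_rpow hp0 hf_aesm hf_nonneg hfp_int
  -- value of ∫ f^p
  have hA : (∫ t, (t ^ (α - 1)) ^ p ∂μ) = 1 / (α * p - p + 1) := by
    rw [integral_congr_ae hfp_eq]
    have : (∫ t, t ^ ((α - 1) * p) ∂μ) = ∫ t in (0:ℝ)..1, t ^ ((α - 1) * p) := by
      rw [intervalIntegral.integral_of_le hle01]
    rw [this, integral_rpow (Or.inl hr)]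
    rw [Real.one_rpow, Real.zero_rpow (by nlinarith)]
    ring_nf
  -- Hölder applied twice
  have h1 := integral_mul_le_Lp_mul_Lq_of_nonneg hpq' hf_nonneg hh_nonneg hfLp hhLp
  have h2 := integral_mul_le_Lp_mul_Lq_of_nonneg hpq' hf_nonneg hh1_nonneg hfLp hh1Lp
  rw [hA] at h1 h2
  -- reflected integral of h^q
  have hB : (∫ t, h (1 - t) ^ q ∂μ) = ∫ t, h t ^ q ∂μ := by
    rw [← intervalIntegral.integral_of_le hle01, ← intervalIntegral.integral_of_le hle01]
    have := intervalIntegral.integral_comp_sub_left (a := 0) (b := 1) (fun t => h t ^ q) 1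
    simpa using this
  rw [hB] at h2
  -- integrability of products
  have hprod1 : Integrable (fun t => t ^ (α - 1) * h t) μ := by
    have := hhLp.smul (𝕜 := ℝ) hfLp (r := 1) (hpqr := ⟨?_⟩)
    · rw [memLp_one_iff_integrable] at this
      exact this
    · rw [inv_one,
        ← ENNReal.ofReal_inv_of_pos hp0, ← ENNReal.ofReal_inv_of_pos hq0,
        ← ENNReal.ofReal_add (by positivity) (by positivity), ← one_div, ← one_div, hpq,
        ENNReal.ofReal_one]
  have hprod2 : Integrable (fun t => t ^ (α - 1) * h (1 - t)) μ := by
    have := hh1Lp.smul (𝕜 := ℝ) hfLp (r := 1) (hpqr := ⟨?_⟩)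
    · rw [memLp_one_iff_integrable] at this
      exact this
    · rw [inv_one,
        ← ENNReal.ofReal_inv_of_pos hp0, ← ENNReal.ofReal_inv_of_pos hq0,
        ← ENNReal.ofReal_add (by positivity) (by positivity), ← one_div, ← one_div, hpq,
        ENNReal.ofReal_one]
  -- split the LHS
  have hsplit : (∫ t in (0:ℝ)..1, t ^ (α - 1) * (h t + h (1 - t)))
      = (∫ t, t ^ (α - 1) * h t ∂μ) + ∫ t, t ^ (α - 1) * h (1 - t) ∂μ := by
    rw [intervalIntegral.integral_of_le hle01, ← hμ, ← integral_add hprod1 hprod2]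
    congr 1
    ext t
    ring
  rw [hsplit]
  have hRHS : (∫ t in (0:ℝ)..1, h t ^ q) = ∫ t, h t ^ q ∂μ := by
    rw [intervalIntegral.integral_of_le hle01]
  rw [hRHS]
  have hC : (0:ℝ) ≤ (∫ t, h t ^ q ∂μ) ^ (1 / q) := by
    apply Real.rpow_nonneg
    apply integral_nonneg_of_ae
    filter_upwards [hh_nonneg] with x hx
    exact Real.rpow_nonneg hx _
  have key : (1 / (α * p - p + 1)) ^ (1 / p) = 1 / (α * p - p + 1) ^ (1 / p) := by
    rw [one_div, Real.inv_rpow hαp.le, one_div, one_div]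
  rw [key] at h1 h2
  calc (∫ t, t ^ (α - 1) * h t ∂μ) + ∫ t, t ^ (α - 1) * h (1 - t) ∂μ
      ≤ 1 / (α * p - p + 1) ^ (1 / p) * (∫ t, h t ^ q ∂μ) ^ (1 / q)
        + 1 / (α * p - p + 1) ^ (1 / p) * (∫ t, h t ^ q ∂μ) ^ (1 / q) := add_le_add h1 h2
    _ = 2 / (α * p - p + 1) ^ (1 / p) * (∫ t, h t ^ q ∂μ) ^ (1 / q) := by ring
end

section
/- Let f be h-convex on an interval I ⊆ ℝ, where h is superadditive on its domain J (i.e. h(x+y) ≥ h(x) + h(y) whenever x, y, x+y ∈ J). Then for all a, b ∈ I and all t ∈ (0,1), f(ta + (1-t)b) + f((1-t)a + tb) ≤ h(1) · [f(a) + f(b)]. -/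
/-- For an h-convex function with h superadditive,
f(ta+(1-t)b) + f((1-t)a+tb) ≤ h(1)·[f(a)+f(b)]. -/
theorem stmt_4 (I J : Set ℝ) (hI : I.OrdConnected) (hJ : Set.Icc (0:ℝ) 1 ⊆ J)
    (h f : ℝ → ℝ)
    (hpos : ∀ x ∈ J, 0 < h x)
    (hfnonneg : ∀ x ∈ I, 0 ≤ f x)
    (hconv : ∀ x ∈ I, ∀ y ∈ I, ∀ t ∈ Set.Ioo (0:ℝ) 1,
      f (t * x + (1 - t) * y) ≤ h t * f x + h (1 - t) * f y)
    (hsuper : ∀ x ∈ J, ∀ y ∈ J, x + y ∈ J → h x + h y ≤ h (x + y)) :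
    ∀ a ∈ I, ∀ b ∈ I, ∀ t ∈ Set.Ioo (0:ℝ) 1,
      f (t * a + (1 - t) * b) + f ((1 - t) * a + t * b)
        ≤ h 1 * (f a + f b) := by
  intro a ha b hb t ht
  obtain ⟨ht0, ht1⟩ := ht
  have ht' : (1 - t) ∈ Set.Ioo (0:ℝ) 1 := ⟨by linarith, by linarith⟩
  have h1 := hconv a ha b hb t ⟨ht0, ht1⟩
  have h2 := hconv a ha b hb (1 - t) ht'
  rw [show (1 - (1 - t)) = t by ring] at h2
  have hJt : t ∈ J := hJ ⟨le_of_lt ht0, le_of_lt ht1⟩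
  have hJt' : (1 - t) ∈ J := hJ ⟨by linarith, by linarith⟩
  have hJ1 : (1:ℝ) ∈ J := hJ ⟨by norm_num, le_refl 1⟩
  have hs := hsuper t hJt (1 - t) hJt' (by rw [show t + (1 - t) = 1 by ring]; exact hJ1)
  rw [show t + (1 - t) = 1 by ring] at hs
  have hfa := hfnonneg a ha
  have hfb := hfnonneg b hb
  nlinarith [hpos t hJt, hpos (1 - t) hJt']
end

section
/- Let f be h-convex on an interval I ⊆ ℝ, let a, b ∈ I with a < b, f ∈ L¹[a,b], and h ∈ L¹[0,1]. Then (1/(b-a)) ∫_a^b f(x) dx ≤ [f(a) + f(b)] · ∫_0^1 h(t) dt. -/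
open MeasureTheory

/-- (1/(b-a)) ∫_a^b f ≤ [f(a)+f(b)] ∫_0^1 h(t) dt for h-convex f. -/
theorem stmt_7 (I J : Set ℝ) (hI : I.OrdConnected) (hJ : Set.Icc (0:ℝ) 1 ⊆ J)
    (h f : ℝ → ℝ)
    (hpos : ∀ x ∈ J, 0 < h x)
    (hfnonneg : ∀ x ∈ I, 0 ≤ f x)
    (hconv : ∀ x ∈ I, ∀ y ∈ I, ∀ t ∈ Set.Ioo (0:ℝ) 1,
      f (t * x + (1 - t) * y) ≤ h t * f x + h (1 - t) * f y)
    (a b : ℝ) (ha : a ∈ I) (hb : b ∈ I) (hab : a < b)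
    (hfint : IntervalIntegrable f volume a b)
    (hhint : IntervalIntegrable h volume 0 1) :
    (1 / (b - a)) * ∫ x in a..b, f x ≤ (f a + f b) * ∫ t in (0:ℝ)..1, h t := by
  have hc : a - b ≠ 0 := by linarith
  -- integrability of g t = f ((a-b)*t + b) on [0,1]
  have hg1 : IntervalIntegrable (fun t => f ((a - b) * t + b)) volume 0 1 := by
    have h1 := (hfint.comp_add_right b).comp_mul_left (c := a - b)
    have e1 : (a - b) / (a - b) = 1 := div_self hc
    have e2 : (b - b) / (a - b) = 0 := by simp
    rw [e1, e2] at h1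
    exact h1.symm
  -- integrability of t ↦ h (1 - t) on [0,1]
  have hh1 : IntervalIntegrable (fun t => h (1 - t)) volume 0 1 := by
    have := hhint.comp_sub_left 1
    simpa using this.symm
  -- a.e. inequality on Icc 0 1
  have hae : (fun t => f ((a - b) * t + b)) ≤ᵐ[volume.restrict (Set.Icc (0:ℝ) 1)]
      fun t => h t * f a + h (1 - t) * f b := by
    have hnull : volume ({0, 1} : Set ℝ) = 0 :=
      ((Set.finite_singleton (1:ℝ)).insert 0).measure_zero volume
    filter_upwards [ae_restrict_mem measurableSet_Icc,
      ae_restrict_of_ae (measure_eq_zero_iff_ae_notMem.1 hnull)] with t ht ht2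
    have h0 : t ≠ 0 := fun h => ht2 (by simp [h])
    have h1' : t ≠ 1 := fun h => ht2 (by simp [h])
    have htIoo : t ∈ Set.Ioo (0:ℝ) 1 :=
      ⟨lt_of_le_of_ne ht.1 (Ne.symm h0), lt_of_le_of_ne ht.2 h1'⟩
    have := hconv a ha b hb t htIoo
    have heq : t * a + (1 - t) * b = (a - b) * t + b := by ring
    rw [heq] at this
    exact this
  have hmono := intervalIntegral.integral_mono_ae_restrict (μ := volume) zero_le_one hg1
    ((hhint.mul_const (f a)).add (hh1.mul_const (f b))) hae
  -- compute the left integral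
  have hcomp : (∫ t in (0:ℝ)..1, f ((a - b) * t + b))
      = (a - b)⁻¹ * ∫ x in b..a, f x := by
    rw [intervalIntegral.integral_comp_mul_add f hc b]
    norm_num
  have hsub : (∫ t in (0:ℝ)..1, h (1 - t)) = ∫ t in (0:ℝ)..1, h t := by
    rw [intervalIntegral.integral_comp_sub_left h 1]
    norm_num
  have hR : (∫ t in (0:ℝ)..1, (h t * f a + h (1 - t) * f b))
      = (f a + f b) * ∫ t in (0:ℝ)..1, h t := by
    rw [intervalIntegral.integral_add (hhint.mul_const (f a)) (hh1.mul_const (f b)),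
      intervalIntegral.integral_mul_const, intervalIntegral.integral_mul_const, hsub]
    ring
  rw [hcomp, hR, intervalIntegral.integral_symm a b] at hmono
  have heq2 : (a - b)⁻¹ * -∫ x in a..b, f x = (1 / (b - a)) * ∫ x in a..b, f x := by
    have : a - b = -(b - a) := by ring
    rw [this, inv_neg, one_div]; ring
  linarith [heq2 ▸ hmono]
end

section
/- Let f be h-convex on an interval I ⊆ ℝ, let a, b ∈ I with a < b, f ∈ L¹[a,b], and let q > 1 with h^q ∈ L¹[0,1]. Then (1/(b-a)) ∫_a^b f(x) dx ≤ [f(a) + f(b)] · (∫_0^1 h(t)^q dt)^{1/q}. -/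
open MeasureTheory

/-- (1/(b-a)) ∫_a^b f ≤ [f(a)+f(b)]·(∫_0^1 h(t)^q dt)^{1/q} for h-convex f. -/
theorem stmt_8 (I J : Set ℝ) (hI : I.OrdConnected) (hJ : Set.Icc (0:ℝ) 1 ⊆ J)
    (h f : ℝ → ℝ)
    (hpos : ∀ x ∈ J, 0 < h x)
    (hfnonneg : ∀ x ∈ I, 0 ≤ f x)
    (hconv : ∀ x ∈ I, ∀ y ∈ I, ∀ t ∈ Set.Ioo (0:ℝ) 1,
      f (t * x + (1 - t) * y) ≤ h t * f x + h (1 - t) * f y)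
    (a b : ℝ) (ha : a ∈ I) (hb : b ∈ I) (hab : a < b)
    (hfint : IntervalIntegrable f volume a b)
    (q : ℝ) (hq : 1 < q)
    (hhq : IntervalIntegrable (fun t => h t ^ q) volume 0 1) :
    (1 / (b - a)) * ∫ x in a..b, f x
      ≤ (f a + f b) * (∫ t in (0:ℝ)..1, h t ^ q) ^ (1 / q) := by
  have hq0 : (0:ℝ) < q := lt_trans zero_lt_one hq
  have hIab : Set.Icc a b ⊆ I := hI.out ha hb
  have hmemI : ∀ t ∈ Set.Icc (0:ℝ) 1, t * a + (1 - t) * b ∈ I := by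
    intro t ht
    exact hIab ⟨by nlinarith [ht.1, ht.2], by nlinarith [ht.1, ht.2]⟩
  -- the restricted measure on (0,1]
  set μ : Measure ℝ := volume.restrict (Set.Ioc (0:ℝ) 1) with hμ
  have hμuniv : μ Set.univ = 1 := by
    rw [hμ, Measure.restrict_apply_univ, Real.volume_Ioc]
    norm_num
  haveI : IsProbabilityMeasure μ := ⟨hμuniv⟩
  -- h^q is integrable w.r.t. μ
  have hhqμ : Integrable (fun t => h t ^ q) μ := by
    rw [hμ]
    exact (intervalIntegrable_iff_integrableOn_Ioc_of_le zero_le_one).mp hhq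
  -- a.e. membership in Ioc
  have hmemae : ∀ᵐ t ∂μ, t ∈ Set.Ioc (0:ℝ) 1 := ae_restrict_mem measurableSet_Ioc
  have hJmem : ∀ t ∈ Set.Ioc (0:ℝ) 1, t ∈ J := fun t ht => hJ ⟨le_of_lt ht.1, ht.2⟩
  -- h is a.e. strongly measurable w.r.t. μ
  have hmeas : AEStronglyMeasurable h μ := by
    have h1 : AEStronglyMeasurable (fun t => (h t ^ q) ^ (1/q)) μ :=
      (Real.continuous_rpow_const (by positivity)).comp_aestronglyMeasurable
        hhqμ.aestronglyMeasurable
    refine h1.congr ?_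
    filter_upwards [hmemae] with t ht
    have hpt : 0 < h t := hpos t (hJmem t ht)
    rw [← Real.rpow_mul hpt.le, mul_one_div, div_self (ne_of_gt hq0), Real.rpow_one]
  -- h ∈ L^q(μ)
  have hqne : (ENNReal.ofReal q) ≠ 0 := (ENNReal.ofReal_pos.mpr hq0).ne'
  have hLq : MemLp h (ENNReal.ofReal q) μ := by
    have key : MemLp (fun x => ‖h x‖ ^ (ENNReal.ofReal q).toReal)
        ((ENNReal.ofReal q) / (ENNReal.ofReal q)) μ := by
      rw [ENNReal.div_self hqne ENNReal.ofReal_ne_top, memLp_one_iff_integrable]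
      refine hhqμ.congr ?_
      filter_upwards [hmemae] with t ht
      rw [ENNReal.toReal_ofReal hq0.le, Real.norm_of_nonneg (hpos t (hJmem t ht)).le]
    exact (memLp_norm_rpow_iff (p := ENNReal.ofReal q) hmeas hqne
      ENNReal.ofReal_ne_top).mp key
  -- h is integrable w.r.t. μ
  have hhint : Integrable h μ :=
    hLq.integrable (by rw [← ENNReal.ofReal_one]; exact ENNReal.ofReal_le_ofReal hq.le)
  have hhii : IntervalIntegrable h volume 0 1 := by
    rw [intervalIntegrable_iff_integrableOn_Ioc_of_le zero_le_one]
    exact hhint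
  -- Hölder: ∫ h dμ ≤ (∫ h^q dμ)^(1/q)
  have hpq : (Real.conjExponent q).HolderConjugate q :=
    (Real.HolderConjugate.conjExponent hq).symm
  have holder : ∫ t, h t ∂μ ≤ (∫ t, h t ^ q ∂μ) ^ (1 / q) := by
    have h1 : MemLp (fun _ : ℝ => (1:ℝ)) (ENNReal.ofReal (Real.conjExponent q)) μ :=
      memLp_const 1
    have := integral_mul_le_Lp_mul_Lq_of_nonneg (μ := μ) hpq
      (f := fun _ => (1:ℝ)) (g := h)
      (Filter.Eventually.of_forall fun _ => zero_le_one)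
      (by filter_upwards [hmemae] with t ht; exact (hpos t (hJmem t ht)).le)
      h1 hLq
    simpa [Real.one_rpow, hμuniv] using this
  -- substitution: ∫_0^1 f((a-b)t+b) dt = (1/(b-a)) ∫_a^b f
  have hsub : ∫ t in (0:ℝ)..1, f ((a-b) * t + b) = (1 / (b - a)) * ∫ x in a..b, f x := by
    rw [intervalIntegral.integral_comp_mul_add f (sub_ne_zero.mpr (ne_of_lt hab)) b]
    rw [intervalIntegral.integral_symm]
    simp only [mul_zero, zero_add, mul_one, sub_add_cancel, smul_eq_mul]
    field_simp
    rw [show (a - b : ℝ) = -(b - a) by ring, div_neg, neg_neg]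
  -- integrability of the composed function
  have hgint : IntervalIntegrable (fun t => f ((a-b) * t + b)) volume 0 1 := by
    have h1 : IntervalIntegrable (fun x => f (x + b)) volume (a - b) (b - b) :=
      hfint.comp_add_right b
    have h2 : IntervalIntegrable (fun x => f ((a-b) * x + b)) volume
        ((a-b)/(a-b)) ((b-b)/(a-b)) :=
      h1.comp_mul_left (c := a - b)
    have hne : a - b ≠ 0 := sub_ne_zero.mpr (ne_of_lt hab)
    rw [div_self hne, sub_self, zero_div] at h2
    exact h2.symm
  -- integrability of the bound
  have hbint : IntervalIntegrable (fun t => h t * f a + h (1-t) * f b) volume 0 1 := by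
    have h2 : IntervalIntegrable (fun t => h (1 - t)) volume 0 1 := by
      have := hhii.comp_sub_left 1
      simpa using this.symm
    exact (hhii.mul_const (f a)).add (h2.mul_const (f b))
  -- pointwise bound a.e. on Icc 0 1
  have hmono : ∫ t in (0:ℝ)..1, f ((a-b) * t + b)
      ≤ ∫ t in (0:ℝ)..1, (h t * f a + h (1-t) * f b) := by
    apply intervalIntegral.integral_mono_ae_restrict zero_le_one hgint hbint
    have hne : ∀ᵐ t ∂(volume.restrict (Set.Icc (0:ℝ) 1)), t ≠ 0 ∧ t ≠ 1 := by
      refine ae_restrict_of_ae ?_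
      have : ({0, 1} : Set ℝ).Countable := Set.Countable.insert 0 (Set.countable_singleton 1)
      filter_upwards [this.ae_notMem volume] with t ht
      simp only [Set.mem_insert_iff, Set.mem_singleton_iff] at ht
      exact ⟨fun h0 => ht (Or.inl h0), fun h1 => ht (Or.inr h1)⟩
    filter_upwards [hne, ae_restrict_mem measurableSet_Icc] with t ht htIcc
    have htIoo : t ∈ Set.Ioo (0:ℝ) 1 :=
      ⟨lt_of_le_of_ne htIcc.1 (Ne.symm ht.1), lt_of_le_of_ne htIcc.2 ht.2⟩
    have := hconv a ha b hb t htIoo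
    have heq : (a - b) * t + b = t * a + (1 - t) * b := by ring
    rw [heq]
    exact this
  -- evaluate the bound integral
  have heval : ∫ t in (0:ℝ)..1, (h t * f a + h (1-t) * f b)
      = (f a + f b) * ∫ t in (0:ℝ)..1, h t := by
    have h2 : IntervalIntegrable (fun t => h (1 - t)) volume 0 1 := by
      have := hhii.comp_sub_left 1
      simp only [sub_zero, sub_self] at this
      exact this.symm
    rw [intervalIntegral.integral_add (hhii.mul_const (f a)) (h2.mul_const (f b)),
      intervalIntegral.integral_mul_const, intervalIntegral.integral_mul_const]
    have h3 : ∫ t in (0:ℝ)..1, h (1 - t) = ∫ t in (0:ℝ)..1, h t := by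
      have := intervalIntegral.integral_comp_sub_left (a := (0:ℝ)) (b := 1) h 1
      simp only [sub_zero, sub_self] at this
      exact this
    rw [h3]; ring
  -- convert μ-integrals to interval integrals
  have hμint1 : ∫ t in (0:ℝ)..1, h t = ∫ t, h t ∂μ := by
    rw [intervalIntegral.integral_of_le zero_le_one]
  have hμint2 : ∫ t in (0:ℝ)..1, h t ^ q = ∫ t, h t ^ q ∂μ := by
    rw [intervalIntegral.integral_of_le zero_le_one]
  -- nonnegativity of f a + f b
  have hfab : 0 ≤ f a + f b := add_nonneg (hfnonneg a ha) (hfnonneg b hb)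
  calc (1 / (b - a)) * ∫ x in a..b, f x
      = ∫ t in (0:ℝ)..1, f ((a-b) * t + b) := hsub.symm
    _ ≤ ∫ t in (0:ℝ)..1, (h t * f a + h (1-t) * f b) := hmono
    _ = (f a + f b) * ∫ t in (0:ℝ)..1, h t := heval
    _ ≤ (f a + f b) * (∫ t in (0:ℝ)..1, h t ^ q) ^ (1 / q) := by
        apply mul_le_mul_of_nonneg_left _ hfab
        rw [hμint1, hμint2]
        exact holder
end

section
/- Let f : I → ℝ be a nonnegative P-function (i.e. f(λx + (1-λ)y) ≤ f(x) + f(y) for all x, y ∈ I and λ ∈ (0,1)) on an interval I ⊆ ℝ, let a, b ∈ I with a < b, and let f ∈ L¹[a,b]. Then (1/(b-a)) ∫_a^b f(x) dx ≤ f(a) + f(b). -/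
open MeasureTheory

/-- For a nonnegative P-function, (1/(b-a)) ∫_a^b f ≤ f(a)+f(b). -/
theorem stmt_9 (I : Set ℝ) (hI : I.OrdConnected)
    (f : ℝ → ℝ)
    (hfnonneg : ∀ x ∈ I, 0 ≤ f x)
    (hP : ∀ x ∈ I, ∀ y ∈ I, ∀ t ∈ Set.Ioo (0:ℝ) 1,
      f (t * x + (1 - t) * y) ≤ f x + f y)
    (a b : ℝ) (ha : a ∈ I) (hb : b ∈ I) (hab : a < b)
    (hfint : IntervalIntegrable f volume a b) :
    (1 / (b - a)) * ∫ x in a..b, f x ≤ f a + f b := by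
  have hba : (0:ℝ) < b - a := by linarith
  have hbound : ∀ x ∈ Set.Icc a b, f x ≤ f a + f b := by
    intro x hx
    rcases eq_or_lt_of_le hx.1 with h1 | h1
    · subst h1; have := hfnonneg b hb; linarith
    rcases eq_or_lt_of_le hx.2 with h2 | h2
    · subst h2; have := hfnonneg a ha; linarith
    have ht : (b - x) / (b - a) ∈ Set.Ioo (0:ℝ) 1 := by
      constructor
      · apply div_pos (by linarith) hba
      · rw [div_lt_one hba]; linarith
    have := hP a ha b hb _ ht
    have hx' : (b - x) / (b - a) * a + (1 - (b - x) / (b - a)) * b = x := by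
      field_simp
      ring
    rwa [hx'] at this
  have hmono : ∫ x in a..b, f x ≤ ∫ _x in a..b, (f a + f b) := by
    apply intervalIntegral.integral_mono_on hab.le hfint (intervalIntegrable_const)
    exact hbound
  rw [intervalIntegral.integral_const, smul_eq_mul] at hmono
  rw [div_mul_eq_mul_div, div_le_iff₀ hba, one_mul]
  linarith
end

section
/- Let s ∈ (0,1], let f : [0,∞) → ℝ be s-convex in the second sense and nonnegative, let 0 ≤ a < b with f ∈ L¹[a,b], and let q > 1. Then (1/(b-a)) ∫_a^b f(x) dx ≤ (f(a) + f(b))/(s+1) and (f(a) + f(b))/(s+1) ≤ (f(a) + f(b))/(sq+1)^{1/q}. -/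
open MeasureTheory

/-- For s-convex (second sense) nonnegative f,
(1/(b-a)) ∫_a^b f ≤ (f(a)+f(b))/(s+1) ≤ (f(a)+f(b))/(sq+1)^{1/q}. -/
theorem stmt_10 (s : ℝ) (hs : s ∈ Set.Ioc (0:ℝ) 1)
    (f : ℝ → ℝ)
    (hfnonneg : ∀ x, 0 ≤ x → 0 ≤ f x)
    (hsconv : ∀ x, 0 ≤ x → ∀ y, 0 ≤ y → ∀ t ∈ Set.Icc (0:ℝ) 1,
      f (t * x + (1 - t) * y) ≤ t ^ s * f x + (1 - t) ^ s * f y)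
    (a b : ℝ) (ha : 0 ≤ a) (hab : a < b)
    (hfint : IntervalIntegrable f volume a b)
    (q : ℝ) (hq : 1 < q) :
    (1 / (b - a)) * ∫ x in a..b, f x ≤ (f a + f b) / (s + 1) ∧
      (f a + f b) / (s + 1) ≤ (f a + f b) / (s * q + 1) ^ (1 / q) := by
  obtain ⟨hs0, hs1⟩ := hs
  have hba : (0:ℝ) < b - a := by linarith
  have hb : (0:ℝ) ≤ b := by linarith
  have hs1' : (0:ℝ) < s + 1 := by linarith
  constructor
  · -- first inequality
    set g : ℝ → ℝ := fun x => ((b - x) / (b - a)) ^ s * f a + ((x - a) / (b - a)) ^ s * f b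
      with hg
    have hgc : Continuous g := by
      apply Continuous.add
      · exact (((continuous_const.sub continuous_id).div_const _).rpow_const
          (fun x => Or.inr hs0.le)).mul continuous_const
      · exact (((continuous_id.sub continuous_const).div_const _).rpow_const
          (fun x => Or.inr hs0.le)).mul continuous_const
    have hgint : IntervalIntegrable g volume a b := hgc.intervalIntegrable a b
    have hmono : ∀ x ∈ Set.Icc a b, f x ≤ g x := by
      intro x hx
      have ht : (b - x) / (b - a) ∈ Set.Icc (0:ℝ) 1 := by
        constructor
        · apply div_nonneg (by linarith [hx.2]) hba.le
        · rw [div_le_one hba]; linarith [hx.1]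
      have h1t : 1 - (b - x) / (b - a) = (x - a) / (b - a) := by
        field_simp; ring
      have hx' : (b - x) / (b - a) * a + (1 - (b - x) / (b - a)) * b = x := by
        rw [h1t]; field_simp; ring
      have := hsconv a ha b hb _ ht
      rw [hx'] at this
      simpa [hg, h1t] using this
    have key := intervalIntegral.integral_mono_on hab.le hfint hgint hmono
    have hI1 : (∫ x in a..b, (b - x) ^ s) = (b - a) ^ (s + 1) / (s + 1) := by
      have := intervalIntegral.integral_comp_sub_left (a := a) (b := b)
        (fun x => x ^ s) b
      rw [this]
      simp only [sub_self]
      rw [integral_rpow (Or.inl (by linarith))]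
      rw [Real.zero_rpow (by linarith)]
      ring
    have hI2 : (∫ x in a..b, (x - a) ^ s) = (b - a) ^ (s + 1) / (s + 1) := by
      have := intervalIntegral.integral_comp_sub_right (a := a) (b := b)
        (fun x => x ^ s) a
      rw [this]
      simp only [sub_self]
      rw [integral_rpow (Or.inl (by linarith))]
      rw [Real.zero_rpow (by linarith)]
      ring
    have hgval : (∫ x in a..b, g x) = (b - a) * (f a + f b) / (s + 1) := by
      have e1 : ∀ x ∈ Set.uIcc a b, ((b - x) / (b - a)) ^ s
          = (b - x) ^ s / (b - a) ^ s := by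
        intro x hx
        rw [Set.uIcc_of_le hab.le] at hx
        exact Real.div_rpow (by linarith [hx.2]) hba.le s
      have e2 : ∀ x ∈ Set.uIcc a b, ((x - a) / (b - a)) ^ s
          = (x - a) ^ s / (b - a) ^ s := by
        intro x hx
        rw [Set.uIcc_of_le hab.le] at hx
        exact Real.div_rpow (by linarith [hx.1]) hba.le s
      have : (∫ x in a..b, g x)
          = ∫ x in a..b, ((b - x) ^ s / (b - a) ^ s * f a
              + (x - a) ^ s / (b - a) ^ s * f b) := by
        apply intervalIntegral.integral_congr
        intro x hx
        simp only [hg]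
        rw [e1 x hx, e2 x hx]
      rw [this]
      have hint1 : IntervalIntegrable (fun x => (b - x) ^ s / (b - a) ^ s * f a)
          volume a b := by
        apply Continuous.intervalIntegrable
        exact (((continuous_const.sub continuous_id).rpow_const
          (fun x => Or.inr hs0.le)).div_const _).mul continuous_const
      have hint2 : IntervalIntegrable (fun x => (x - a) ^ s / (b - a) ^ s * f b)
          volume a b := by
        apply Continuous.intervalIntegrable
        exact (((continuous_id.sub continuous_const).rpow_const
          (fun x => Or.inr hs0.le)).div_const _).mul continuous_const
      rw [intervalIntegral.integral_add hint1 hint2]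
      have r1 : (∫ x in a..b, (b - x) ^ s / (b - a) ^ s * f a)
          = (∫ x in a..b, (b - x) ^ s) / (b - a) ^ s * f a := by
        simp_rw [div_mul_eq_mul_div, mul_div_assoc]
        rw [intervalIntegral.integral_mul_const]
      have r2 : (∫ x in a..b, (x - a) ^ s / (b - a) ^ s * f b)
          = (∫ x in a..b, (x - a) ^ s) / (b - a) ^ s * f b := by
        simp_rw [div_mul_eq_mul_div, mul_div_assoc]
        rw [intervalIntegral.integral_mul_const]
      rw [r1, r2, hI1, hI2]
      have hpow : (b - a) ^ (s + 1) = (b - a) ^ s * (b - a) := by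
        rw [Real.rpow_add hba, Real.rpow_one]
      rw [hpow]
      have hbs : (b - a) ^ s ≠ 0 := (Real.rpow_pos_of_pos hba s).ne'
      field_simp
    rw [hgval] at key
    rw [div_mul_eq_mul_div, one_mul, div_le_div_iff₀ hba hs1']
    calc (∫ x in a..b, f x) * (s + 1) ≤ ((b - a) * (f a + f b) / (s + 1)) * (s + 1) := by
          apply mul_le_mul_of_nonneg_right key hs1'.le
      _ = (f a + f b) * (b - a) := by field_simp
  · -- second inequality
    have hq0 : (0:ℝ) < q := by linarith
    have hnum : 0 ≤ f a + f b := add_nonneg (hfnonneg a ha) (hfnonneg b hb)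
    have hsq : (0:ℝ) < s * q + 1 := by positivity
    have hbern : s * q + 1 ≤ (1 + s) ^ q := by
      have := one_add_mul_self_le_rpow_one_add (by linarith : (-1:ℝ) ≤ s) hq.le
      linarith
    have hle : (s * q + 1) ^ (1 / q) ≤ s + 1 := by
      have h1 : (s * q + 1) ^ (1 / q) ≤ ((1 + s) ^ q) ^ (1 / q) :=
        Real.rpow_le_rpow hsq.le hbern (by positivity)
      have h2 : ((1 + s) ^ q) ^ (1 / q) = 1 + s := by
        rw [← Real.rpow_mul (by linarith : (0:ℝ) ≤ 1 + s), mul_one_div_cancel hq0.ne', Real.rpow_one]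
      rw [h2] at h1
      linarith
    have hpos : (0:ℝ) < (s * q + 1) ^ (1 / q) := Real.rpow_pos_of_pos hsq _
    exact div_le_div_of_nonneg_left hnum hpos hle
end

section
/- Let f be h-convex on an interval I ⊆ ℝ with h(1/2) > 0, let a, b ∈ I with a < b, f ∈ L¹[a,b], and h ∈ L¹[0,1]. Then (1/(2h(1/2))) · f((a+b)/2) ≤ (1/(b-a)) ∫_a^b f(x) dx ≤ [f(a) + f(b)] · ∫_0^1 h(t) dt. -/
open MeasureTheory

/-- Hermite–Hadamard inequality for h-convex functions:
(1/(2h(1/2))) f((a+b)/2) ≤ (1/(b-a)) ∫_a^b f ≤ [f(a)+f(b)] ∫_0^1 h. -/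
theorem stmt_16 (I J : Set ℝ) (hI : I.OrdConnected) (hJ : Set.Icc (0:ℝ) 1 ⊆ J)
    (h f : ℝ → ℝ)
    (hpos : ∀ x ∈ J, 0 < h x)
    (hhalf : 0 < h (1/2))
    (hfnonneg : ∀ x ∈ I, 0 ≤ f x)
    (hconv : ∀ x ∈ I, ∀ y ∈ I, ∀ t ∈ Set.Ioo (0:ℝ) 1,
      f (t * x + (1 - t) * y) ≤ h t * f x + h (1 - t) * f y)
    (a b : ℝ) (ha : a ∈ I) (hb : b ∈ I) (hab : a < b)
    (hfint : IntervalIntegrable f volume a b)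
    (hhint : IntervalIntegrable h volume 0 1) :
    (1 / (2 * h (1/2))) * f ((a + b) / 2) ≤ (1 / (b - a)) * ∫ x in a..b, f x ∧
    (1 / (b - a)) * ∫ x in a..b, f x ≤ (f a + f b) * ∫ t in (0:ℝ)..1, h t := by
  have hba : (0:ℝ) < b - a := by linarith
  have hIab : Set.Icc a b ⊆ I := hI.out ha hb
  set S := ∫ x in a..b, f x with hS
  -- integrability of reflected f
  have hrefl : IntervalIntegrable (fun x => f (a + b - x)) volume a b := by
    have := (hfint.comp_sub_left (a + b))
    simpa using this.symm
  have hreflint : (∫ x in a..b, f (a + b - x)) = S := by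
    have := intervalIntegral.integral_comp_sub_left f (a + b) (a := a) (b := b)
    rw [this, add_sub_cancel_right, add_sub_cancel_left]
  constructor
  · -- left inequality
    have key : ∀ x ∈ Set.Icc a b,
        f ((a + b) / 2) ≤ h (1/2) * f x + h (1/2) * f (a + b - x) := by
      intro x hx
      have hx' : x ∈ I := hIab hx
      have hx'' : a + b - x ∈ I := hIab ⟨by linarith [hx.2], by linarith [hx.1]⟩
      have := hconv x hx' (a + b - x) hx'' (1/2) (by norm_num)
      have e1 : (1:ℝ) - 1/2 = 1/2 := by norm_num
      rw [e1] at this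
      calc f ((a + b) / 2) = f ((1/2) * x + (1/2) * (a + b - x)) := by ring_nf
        _ ≤ h (1/2) * f x + h (1/2) * f (a + b - x) := this
    have hgint : IntervalIntegrable
        (fun x => h (1/2) * f x + h (1/2) * f (a + b - x)) volume a b :=
      (hfint.const_mul _).add (hrefl.const_mul _)
    have hmono := intervalIntegral.integral_mono_on hab.le
      (intervalIntegrable_const (c := f ((a + b) / 2))) hgint key
    rw [intervalIntegral.integral_const, smul_eq_mul] at hmono
    have hsum : (∫ x in a..b, (h (1/2) * f x + h (1/2) * f (a + b - x)))
        = 2 * h (1/2) * S := by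
      rw [intervalIntegral.integral_add (hfint.const_mul _) (hrefl.const_mul _),
        intervalIntegral.integral_const_mul, intervalIntegral.integral_const_mul,
        hreflint, ← hS]
      ring
    rw [hsum] at hmono
    have goal' : f ((a + b) / 2) / (2 * h (1/2)) ≤ S / (b - a) := by
      rw [div_le_div_iff₀ (by positivity) hba]
      nlinarith [hmono]
    calc (1 / (2 * h (1/2))) * f ((a + b) / 2)
        = f ((a + b) / 2) / (2 * h (1/2)) := by ring
      _ ≤ S / (b - a) := goal'
      _ = (1 / (b - a)) * S := by ring
  · -- right inequality
    have hsub : (∫ t in (0:ℝ)..1, f ((b - a) * t + a)) = (b - a)⁻¹ * S := by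
      rw [intervalIntegral.integral_comp_mul_add f (ne_of_gt hba) a]
      norm_num [smul_eq_mul, hS]
    have hlint : IntervalIntegrable (fun t => f ((b - a) * t + a)) volume 0 1 := by
      have h1 : IntervalIntegrable (fun x => f (x + a)) volume 0 (b - a) := by
        simpa using hfint.comp_add_right a
      have h2 := h1.comp_mul_left (c := b - a)
      simpa [ne_of_gt hba] using h2
    have hh1 : IntervalIntegrable (fun t => h (1 - t)) volume 0 1 := by
      simpa using (hhint.comp_sub_left 1).symm
    have hGint : IntervalIntegrable (fun t => h t * f b + h (1 - t) * f a) volume 0 1 :=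
      (hhint.mul_const _).add (hh1.mul_const _)
    have hae : (fun t => f ((b - a) * t + a))
        ≤ᵐ[volume.restrict (Set.Icc (0:ℝ) 1)] fun t => h t * f b + h (1 - t) * f a := by
      have h01 : ∀ᵐ t : ℝ ∂(volume.restrict (Set.Icc (0:ℝ) 1)), t ≠ 0 ∧ t ≠ 1 := by
        refine MeasureTheory.ae_restrict_of_ae ?_
        have h0 : ∀ᵐ t : ℝ, t ≠ (0:ℝ) := by
          simpa [ae_iff] using Real.volume_singleton (x := (0:ℝ))
        have h1 : ∀ᵐ t : ℝ, t ≠ (1:ℝ) := by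
          simpa [ae_iff] using Real.volume_singleton (x := (1:ℝ))
        filter_upwards [h0, h1] with t ht0 ht1 using ⟨ht0, ht1⟩
      have hmem : ∀ᵐ t : ℝ ∂(volume.restrict (Set.Icc (0:ℝ) 1)), t ∈ Set.Icc (0:ℝ) 1 :=
        MeasureTheory.ae_restrict_mem measurableSet_Icc
      filter_upwards [h01, hmem] with t ht htm
      have htIoo : t ∈ Set.Ioo (0:ℝ) 1 :=
        ⟨lt_of_le_of_ne htm.1 (Ne.symm ht.1), lt_of_le_of_ne htm.2 ht.2⟩
      have := hconv b hb a ha t htIoo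
      calc f ((b - a) * t + a) = f (t * b + (1 - t) * a) := by ring_nf
        _ ≤ h t * f b + h (1 - t) * f a := this
    have hmono := intervalIntegral.integral_mono_ae_restrict (by norm_num : (0:ℝ) ≤ 1)
      hlint hGint hae
    have hG : (∫ t in (0:ℝ)..1, (h t * f b + h (1 - t) * f a))
        = (f a + f b) * ∫ t in (0:ℝ)..1, h t := by
      rw [intervalIntegral.integral_add (hhint.mul_const _) (hh1.mul_const _),
        intervalIntegral.integral_mul_const, intervalIntegral.integral_mul_const]
      have : (∫ t in (0:ℝ)..1, h (1 - t)) = ∫ t in (0:ℝ)..1, h t := by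
        have := intervalIntegral.integral_comp_sub_left h 1 (a := (0:ℝ)) (b := 1)
        simpa using this
      rw [this]; ring
    rw [hsub, hG] at hmono
    rw [one_div, inv_mul_eq_div]
    calc S / (b - a) = (b - a)⁻¹ * S := by rw [div_eq_inv_mul]
      _ ≤ (f a + f b) * ∫ t in (0:ℝ)..1, h t := hmono
end
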